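/- arXiv:2102.02070 — 5 statements merged into one kernel-verified Lean document; each statement's English description precedes it below -/
import Mathlib

section
/- Let k be a positive integer, c > 0 a constant, and define a: [0, π/2] → [0, π] by a(s) = 2·arctan(c·tanᵏ(s)) (with a(π/2) = π by continuity). Then a satisfies the ordinary differential equation a'(s) = sin(a(s))·√(k²/sin²s + k²/cos²s) for all s ∈ (0, π/2), together with the boundary conditions a(0) = 0 and a(π/2) = π. -/
/-!
Write `u = c tanᵏ s`. Then `u' = k u / (sin s cos s)` and `sin (2 arctan u) = 2u / (1 + u²)`, so
`(2 arctan u)' = 2u' / (1 + u²) = sin (2 arctan u) · k / (sin s cos s)`, and `k / (sin s cos s)` is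
the square root in the equation because `sin² s + cos² s = 1`. At the endpoints `u` is `0` at
`s = 0` and tends to `+∞` as `s → π/2`, where `2 arctan u → π`; continuity pins down `a (π/2)`.
-/

open Real Filter Topology

theorem Real.sin_two_mul_arctan (x : ℝ) : sin (2 * arctan x) = 2 * x / (1 + x ^ 2) := by
  have hpos : 0 < 1 + x ^ 2 := by positivity
  rw [sin_two_mul, sin_arctan, cos_arctan]
  field_simp
  rw [sq_sqrt hpos.le]

theorem Real.sqrt_sq_div_sin_sq_add_sq_div_cos_sq {s : ℝ} (hsin : 0 < sin s) (hcos : 0 < cos s)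
    {k : ℝ} (hk : 0 ≤ k) : √(k ^ 2 / sin s ^ 2 + k ^ 2 / cos s ^ 2) = k / (sin s * cos s) := by
  have hsq : k ^ 2 / sin s ^ 2 + k ^ 2 / cos s ^ 2 = (k / (sin s * cos s)) ^ 2 := by
    field_simp
    linear_combination k ^ 2 * sin_sq_add_cos_sq s
  rw [hsq, sqrt_sq (by positivity)]

theorem Real.hasDerivAt_const_mul_tan_pow (c : ℝ) (k : ℕ) {s : ℝ} (hsin : sin s ≠ 0)
    (hcos : cos s ≠ 0) :
    HasDerivAt (fun x => c * tan x ^ k) (k * (c * tan s ^ k) / (sin s * cos s)) s := by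
  refine (((hasDerivAt_tan hcos).pow k).const_mul c).congr_deriv ?_
  cases k with
  | zero => simp
  | succ m =>
    simp only [tan_eq_sin_div_cos, div_pow]
    push_cast
    field_simp
    ring

theorem Real.hasDerivAt_two_mul_arctan_const_mul_tan_pow (c : ℝ) (k : ℕ) {s : ℝ}
    (hs : s ∈ Set.Ioo 0 (π / 2)) :
    HasDerivAt (fun x => 2 * arctan (c * tan x ^ k))
      (sin (2 * arctan (c * tan s ^ k)) * √((k : ℝ) ^ 2 / sin s ^ 2 + (k : ℝ) ^ 2 / cos s ^ 2))
      s := by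
  have hsin : 0 < sin s := sin_pos_of_pos_of_lt_pi hs.1 (by linarith [hs.2, pi_pos])
  have hcos : 0 < cos s := cos_pos_of_mem_Ioo ⟨by linarith [hs.1, pi_pos], hs.2⟩
  have hu := hasDerivAt_const_mul_tan_pow c k hsin.ne' hcos.ne'
  refine (((hasDerivAt_arctan _).comp s hu).const_mul 2).congr_deriv ?_
  rw [sin_two_mul_arctan, sqrt_sq_div_sin_sq_add_sq_div_cos_sq hsin hcos (Nat.cast_nonneg k)]
  field_simp

theorem Real.tendsto_two_mul_arctan_const_mul_tan_pow {c : ℝ} (hc : 0 < c) {k : ℕ} (hk : k ≠ 0) :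
    Tendsto (fun x => 2 * arctan (c * tan x ^ k)) (𝓝[<] (π / 2)) (𝓝 π) := by
  have hu : Tendsto (fun x => c * tan x ^ k) (𝓝[<] (π / 2)) atTop :=
    ((tendsto_pow_atTop hk).comp tendsto_tan_pi_div_two).const_mul_atTop hc
  have h := (tendsto_arctan_atTop.mono_right nhdsWithin_le_nhds).comp hu |>.const_mul 2
  rwa [mul_div_cancel₀ π two_ne_zero] at h

theorem stmt_2_general (k : ℕ) (hk : 0 < k) (c : ℝ) (hc : 0 < c) (a : ℝ → ℝ)
    (hcont : ContinuousOn a (Set.Icc 0 (π / 2)))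
    (hform : ∀ s ∈ Set.Ico 0 (π / 2), a s = 2 * arctan (c * tan s ^ k)) :
    (∀ s ∈ Set.Ioo 0 (π / 2),
        HasDerivAt a
          (sin (a s) * Real.sqrt ((k : ℝ) ^ 2 / sin s ^ 2 + (k : ℝ) ^ 2 / cos s ^ 2)) s) ∧
      a 0 = 0 ∧ a (π / 2) = π := by
  have hπ : (0 : ℝ) < π / 2 := by positivity
  have hnear : a =ᶠ[𝓝[<] (π / 2)] fun x => 2 * arctan (c * tan x ^ k) :=
    eventually_of_mem (Ico_mem_nhdsLT hπ) hform
  refine ⟨fun s hs => ?_, ?_, ?_⟩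
  · have heq : a =ᶠ[𝓝 s] fun x => 2 * arctan (c * tan x ^ k) :=
      eventually_of_mem (isOpen_Ioo.mem_nhds hs) fun x hx => hform x ⟨hx.1.le, hx.2⟩
    rw [hform s ⟨hs.1.le, hs.2⟩]
    exact (hasDerivAt_two_mul_arctan_const_mul_tan_pow c k hs).congr_of_eventuallyEq heq
  · simp [hform 0 ⟨le_rfl, hπ⟩, hk.ne']
  · have hleft : Tendsto a (𝓝[<] (π / 2)) (𝓝 (a (π / 2))) :=
      (hcont _ ⟨hπ.le, le_rfl⟩).mono_left
        (nhdsWithin_le_of_mem (mem_of_superset (Ico_mem_nhdsLT hπ) Set.Ico_subset_Icc_self))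
    exact tendsto_nhds_unique hleft
      ((tendsto_two_mul_arctan_const_mul_tan_pow hc hk.ne').congr' hnear.symm)

/-- For a positive integer k and c > 0, the function
a(s) = 2·arctan(c·tanᵏ s) on [0, π/2] (extended by continuity at π/2)
satisfies a'(s) = sin(a(s))·√(k²/sin²s + k²/cos²s) on (0, π/2), with
a(0) = 0 and a(π/2) = π. -/
theorem stmt_2 (k : ℕ) (hk : 0 < k) (c : ℝ) (hc : 0 < c) (a : ℝ → ℝ)
    (hcont : ContinuousOn a (Set.Icc 0 (π / 2)))
    (hmaps : Set.MapsTo a (Set.Icc 0 (π / 2)) (Set.Icc 0 π))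
    (hform : ∀ s ∈ Set.Ico 0 (π / 2), a s = 2 * arctan (c * tan s ^ k)) :
    (∀ s ∈ Set.Ioo 0 (π / 2),
        HasDerivAt a
          (sin (a s) * Real.sqrt ((k : ℝ) ^ 2 / sin s ^ 2 + (k : ℝ) ^ 2 / cos s ^ 2)) s) ∧
      a 0 = 0 ∧ a (π / 2) = π :=
  stmt_2_general k hk c hc a hcont hform
end

section
/- Let k, l be positive integers and a: [0, π/2] → [0, π] a smooth strictly increasing function with a(0) = 0, a(π/2) = π, a'(0) > 0, which satisfies both the conformality ODE a'(s) = sin(a(s))·√(k²/sin²s + l²/cos²s) and the minimality ODE a''/(1+a'²) + a'·cos s·sin s·(cos 2s + (l²−k²)sin²a)/D − sin a·cos a·(k²cos²s + l²sin²s)/D = 0 on (0, π/2), where D = sin²s·cos²s + sin²a·(l²sin²s + k²cos²s). Then l² = k². -/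
open Real

set_option maxHeartbeats 1600000 in
/-- If a smooth strictly increasing generating function
a : [0,π/2] → [0,π] with a(0)=0, a(π/2)=π, a'(0)>0 satisfies both the
conformality ODE and the minimality ODE of an a-Hopf construction f_{kl},
then l² = k². -/
theorem stmt_4 (k l : ℕ) (hk : 0 < k) (hl : 0 < l) (a : ℝ → ℝ)
    (ha : ContDiff ℝ (⊤ : ℕ∞) a)
    (hmono : StrictMonoOn a (Set.Icc 0 (π / 2)))
    (hmaps : Set.MapsTo a (Set.Icc 0 (π / 2)) (Set.Icc 0 π))
    (h0 : a 0 = 0) (hpi : a (π / 2) = π) (hd0 : 0 < deriv a 0)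
    (hconf : ∀ s ∈ Set.Ioo 0 (π / 2),
      deriv a s =
        sin (a s) * Real.sqrt ((k : ℝ) ^ 2 / sin s ^ 2 + (l : ℝ) ^ 2 / cos s ^ 2))
    (hmin : ∀ s ∈ Set.Ioo 0 (π / 2),
      deriv (deriv a) s / (1 + (deriv a s) ^ 2) +
          deriv a s * (cos s * sin s *
              (cos (2 * s) + ((l : ℝ) ^ 2 - (k : ℝ) ^ 2) * sin (a s) ^ 2)) /
            (sin s ^ 2 * cos s ^ 2 +
              sin (a s) ^ 2 * ((l : ℝ) ^ 2 * sin s ^ 2 + (k : ℝ) ^ 2 * cos s ^ 2)) -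
          sin (a s) * cos (a s) *
              ((k : ℝ) ^ 2 * cos s ^ 2 + (l : ℝ) ^ 2 * sin s ^ 2) /
            (sin s ^ 2 * cos s ^ 2 +
              sin (a s) ^ 2 * ((l : ℝ) ^ 2 * sin s ^ 2 + (k : ℝ) ^ 2 * cos s ^ 2)) = 0) :
    l ^ 2 = k ^ 2 := by
  have hπ := Real.pi_pos
  set x : ℝ := π / 4 with hxdef
  have hx1 : (0:ℝ) < x := by positivity
  have hx2 : x < π / 2 := by rw [hxdef]; linarith
  have hxIoo : x ∈ Set.Ioo 0 (π / 2) := ⟨hx1, hx2⟩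
  have hsx : Real.sin x = Real.sqrt 2 / 2 := Real.sin_pi_div_four
  have hcx : Real.cos x = Real.sqrt 2 / 2 := Real.cos_pi_div_four
  have h22 : Real.sqrt 2 * Real.sqrt 2 = 2 := Real.mul_self_sqrt (by norm_num)
  have h2 : (Real.sqrt 2 / 2) * (Real.sqrt 2 / 2) = 1 / 2 := by
    rw [div_mul_div_comm, h22]; norm_num
  have hsx2 : Real.sin x ^ 2 = 1 / 2 := by rw [hsx, sq, h2]
  have hcx2 : Real.cos x ^ 2 = 1 / 2 := by rw [hcx, sq, h2]
  have hxIcc : x ∈ Set.Icc 0 (π / 2) := ⟨le_of_lt hx1, le_of_lt hx2⟩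
  have h0Icc : (0:ℝ) ∈ Set.Icc 0 (π / 2) := ⟨le_refl _, by linarith⟩
  have hpIcc : π / 2 ∈ Set.Icc 0 (π / 2) := ⟨by linarith, le_refl _⟩
  have hA0 : 0 < a x := by have := hmono h0Icc hxIcc hx1; rwa [h0] at this
  have hAπ : a x < π := by have := hmono hxIcc hpIcc hx2; rwa [hpi] at this
  set S : ℝ := Real.sin (a x) with hSdef
  set C : ℝ := Real.cos (a x) with hCdef
  have hS : 0 < S := Real.sin_pos_of_pos_of_lt_pi hA0 hAπ
  set L : ℝ := (l:ℝ)^2 with hLdef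
  set Kk : ℝ := (k:ℝ)^2 with hKdef
  have hk' : (0:ℝ) < (k:ℝ) := by exact_mod_cast hk
  have hl' : (0:ℝ) < (l:ℝ) := by exact_mod_cast hl
  have hKpos : (0:ℝ) < Kk + L := by
    have h1 : (0:ℝ) < Kk := by rw [hKdef]; positivity
    have h2 : (0:ℝ) < L := by rw [hLdef]; positivity
    linarith
  set r : ℝ := Real.sqrt (2 * (Kk + L)) with hrdef
  have hrpos : 0 < r := Real.sqrt_pos.mpr (by linarith)
  have hr2 : r ^ 2 = 2 * (Kk + L) := Real.sq_sqrt (by linarith)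
  have hval : Kk / Real.sin x ^ 2 + L / Real.cos x ^ 2 = 2 * (Kk + L) := by
    rw [hsx2, hcx2]; ring
  have hd : deriv a x = S * r := by
    rw [hconf x hxIoo]
    rw [hval]
  -- second derivative via differentiating the conformality ODE
  have hadiff : DifferentiableAt ℝ a x := (ha.differentiable (by simp)).differentiableAt
  have hsin2ne : Real.sin x ^ 2 ≠ 0 := by rw [hsx2]; norm_num
  have hcos2ne : Real.cos x ^ 2 ≠ 0 := by rw [hcx2]; norm_num
  have hvalne : Kk / Real.sin x ^ 2 + L / Real.cos x ^ 2 ≠ 0 := by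
    rw [hval]; linarith
  have hA1 : HasDerivAt (fun s => Real.sin (a s)) (C * deriv a x) x := by
    have := (Real.hasDerivAt_sin (a x)).comp x hadiff.hasDerivAt
    simpa [hCdef, mul_comm, Function.comp_def] using this
  have hs2 : HasDerivAt (fun s => Real.sin s ^ 2) ((2:ℕ) * Real.sin x ^ 1 * Real.cos x) x :=
    (Real.hasDerivAt_sin x).pow 2
  have hc2 : HasDerivAt (fun s => Real.cos s ^ 2) ((2:ℕ) * Real.cos x ^ 1 * (-Real.sin x)) x :=
    (Real.hasDerivAt_cos x).pow 2
  have hq1 : HasDerivAt (fun s => Kk / Real.sin s ^ 2)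
      ((0 * Real.sin x ^ 2 - Kk * ((2:ℕ) * Real.sin x ^ 1 * Real.cos x)) / (Real.sin x ^ 2) ^ 2) x :=
    (hasDerivAt_const x Kk).div hs2 hsin2ne
  have hq2 : HasDerivAt (fun s => L / Real.cos s ^ 2)
      ((0 * Real.cos x ^ 2 - L * ((2:ℕ) * Real.cos x ^ 1 * (-Real.sin x))) / (Real.cos x ^ 2) ^ 2) x :=
    (hasDerivAt_const x L).div hc2 hcos2ne
  have hq := hq1.add hq2
  have hQ := hq.sqrt hvalne
  have hg := hA1.mul hQ
  have hev : deriv a =ᶠ[nhds x] (fun s => Real.sin (a s) *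
      Real.sqrt (Kk / Real.sin s ^ 2 + L / Real.cos s ^ 2)) := by
    filter_upwards [Ioo_mem_nhds hx1 hx2] with s hs
    exact hconf s hs
  have hnum : (0 * Real.sin x ^ 2 - Kk * ((2:ℕ) * Real.sin x ^ 1 * Real.cos x)) / (Real.sin x ^ 2) ^ 2 +
      (0 * Real.cos x ^ 2 - L * ((2:ℕ) * Real.cos x ^ 1 * (-Real.sin x))) / (Real.cos x ^ 2) ^ 2 =
      4 * L - 4 * Kk := by
    have e1 : ((2:ℕ):ℝ) * (Real.sqrt 2 / 2) * (Real.sqrt 2 / 2) = 1 := by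
      push_cast; rw [mul_assoc, h2]; norm_num
    have e2 : ((2:ℕ):ℝ) * (Real.sqrt 2 / 2) * (-(Real.sqrt 2 / 2)) = -1 := by
      push_cast; rw [mul_neg, mul_assoc, h2]; norm_num
    rw [pow_one, pow_one, hsx2, hcx2, hsx, hcx, e1, e2]
    norm_num
    ring
  have hd2' : deriv (deriv a) x = C * (S * r) * r + S * ((4 * L - 4 * Kk) / (2 * r)) := by
    simp only [Pi.add_apply, Pi.add_def, Pi.mul_def] at hg
    rw [hev.deriv_eq, hg.deriv, hval, hnum, hd, ← hrdef, hSdef]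
  -- plug into the minimality ODE at x
  have heq := hmin x hxIoo
  have h2x : (2:ℝ) * x = π / 2 := by rw [hxdef]; ring
  rw [h2x, Real.cos_pi_div_two] at heq
  have hhalf : Real.cos x * Real.sin x = 1 / 2 := by rw [hsx, hcx, h2]
  rw [hd, hd2', hsx2, hcx2, hhalf, ← hSdef, ← hCdef] at heq
  -- algebra
  have hDpos : (0:ℝ) < 1 / 2 * (1 / 2) + S ^ 2 * (L * (1 / 2) + Kk * (1 / 2)) := by
    have hL0 : (0:ℝ) ≤ L := by rw [hLdef]; positivity
    have hK0 : (0:ℝ) ≤ Kk := by rw [hKdef]; positivity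
    have hnn : (0:ℝ) ≤ S ^ 2 * (L * (1 / 2) + Kk * (1 / 2)) :=
      mul_nonneg (sq_nonneg S) (by linarith)
    linarith
  have h1d : (0:ℝ) < 1 + (S * r) ^ 2 := by positivity
  have hDeq : (1:ℝ) / 2 * (1 / 2) + S ^ 2 * (L * (1 / 2) + Kk * (1 / 2)) =
      (1 + (S * r) ^ 2) / 4 := by rw [mul_pow, hr2]; ring
  rw [hDeq] at heq
  have key : L = Kk := by
    have hrne : r ≠ 0 := ne_of_gt hrpos
    have h1 : (1:ℝ) + (S * r) ^ 2 ≠ 0 := ne_of_gt h1d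
    field_simp at heq
    have clean : S * (L - Kk) * (1 + (S * r) ^ 2) ^ 3 = 0 := by
      linear_combination ((1 + (S * r) ^ 2) ^ 2 / 4) * heq - ((1 + (S * r) ^ 2) ^ 2 / 2) * S * C * r * hr2
    have h3 : ((1 + (S * r) ^ 2) ^ 3) ≠ 0 := by positivity
    rcases mul_eq_zero.mp clean with h | h
    · rcases mul_eq_zero.mp h with h' | h'
      · exact absurd h' (ne_of_gt hS)
      · linarith
    · exact absurd h h3
  have : (l:ℝ)^2 = (k:ℝ)^2 := by rw [← hLdef, ← hKdef]; exact key
  exact_mod_cast this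
end

section
/- Let k, l be positive integers and let a: [0, π/2] → [0, π] be smooth with a(0) = 0, a'(0) > 0, satisfying on (0, π/2) the minimality ODE 0 = a''/(1+a'²) + a'·cos s·sin s·(cos 2s + (l²−k²)sin²a)/D − sin a·cos a·(k²cos²s + l²sin²s)/D, where D = sin²s·cos²s + sin²a·(l²sin²s + k²cos²s). If additionally a' > 0 on [0, π/2], then k² = 1. -/
open Real Filter
open scoped ContDiff

lemma slope_tendsto (f : ℝ → ℝ) (f' : ℝ) (h : HasDerivAt f f' 0) (h0 : f 0 = 0) :
    Tendsto (fun s => f s / s) (nhdsWithin 0 (Set.Ioi 0)) (nhds f') := by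
  have h1 := (hasDerivAt_iff_tendsto_slope.mp h).mono_left
    (nhdsWithin_mono _ (fun x hx => ne_of_gt hx))
  refine h1.congr (fun s => ?_)
  simp [slope_def_field, h0]

/-- If a smooth generating function a with a(0) = 0, a'(0) > 0
satisfies the minimality ODE of an a-Hopf construction f_{kl} on (0,π/2),
and a' > 0 on [0, π/2], then k² = 1. -/
theorem stmt_5 (k l : ℕ) (hk : 0 < k) (hl : 0 < l) (a : ℝ → ℝ)
    (ha : ContDiff ℝ (⊤ : ℕ∞) a)
    (hmaps : Set.MapsTo a (Set.Icc 0 (π / 2)) (Set.Icc 0 π))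
    (h0 : a 0 = 0) (hd0 : 0 < deriv a 0)
    (hmin : ∀ s ∈ Set.Ioo 0 (π / 2),
      0 = deriv (deriv a) s / (1 + (deriv a s) ^ 2) +
          deriv a s * (cos s * sin s *
              (cos (2 * s) + ((l : ℝ) ^ 2 - (k : ℝ) ^ 2) * sin (a s) ^ 2)) /
            (sin s ^ 2 * cos s ^ 2 +
              sin (a s) ^ 2 * ((l : ℝ) ^ 2 * sin s ^ 2 + (k : ℝ) ^ 2 * cos s ^ 2)) -
          sin (a s) * cos (a s) *
              ((k : ℝ) ^ 2 * cos s ^ 2 + (l : ℝ) ^ 2 * sin s ^ 2) /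
            (sin s ^ 2 * cos s ^ 2 +
              sin (a s) ^ 2 * ((l : ℝ) ^ 2 * sin s ^ 2 + (k : ℝ) ^ 2 * cos s ^ 2)))
    (hpos : ∀ s ∈ Set.Icc 0 (π / 2), 0 < deriv a s) :
    k ^ 2 = 1 := by
  set A : ℝ := deriv a 0 with hA
  have hdiff : Differentiable ℝ a := ha.differentiable (by simp)
  have ha' : ContDiff ℝ ∞ a := ha.of_le (by simp)
  have hda : ContDiff ℝ ∞ (deriv a) := (contDiff_infty_iff_deriv.mp ha').2
  have hcont_da : Continuous (deriv a) := hda.continuous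
  have hcont_dda : Continuous (deriv (deriv a)) := (contDiff_infty_iff_deriv.mp hda).2.continuous
  -- limits along 𝓝[>] 0
  set F : Filter ℝ := nhdsWithin 0 (Set.Ioi 0) with hF
  have hL1 : Tendsto (fun s => a s / s) F (nhds A) :=
    slope_tendsto a A (hdiff 0).hasDerivAt h0
  have hL2 : Tendsto (fun s => Real.sin (a s) / s) F (nhds A) := by
    have hder : HasDerivAt (fun s => Real.sin (a s)) A 0 := by
      have := (Real.hasDerivAt_sin (a 0)).comp 0 (hdiff 0).hasDerivAt
      simpa [h0, Function.comp_def, ← hA] using this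
    exact slope_tendsto _ A hder (by simp [h0])
  have hL3 : Tendsto (fun s : ℝ => Real.sin s / s) F (nhds 1) := by
    have := slope_tendsto Real.sin 1 (by simpa using Real.hasDerivAt_sin 0) (by simp)
    exact this
  -- continuity limits
  have hcs : Tendsto (fun s : ℝ => Real.cos s) F (nhds 1) := by
    refine Tendsto.mono_left ?_ nhdsWithin_le_nhds
    simpa using Real.continuous_cos.tendsto 0
  have hss : Tendsto (fun s : ℝ => Real.sin s) F (nhds 0) := by
    refine Tendsto.mono_left ?_ nhdsWithin_le_nhds
    simpa using Real.continuous_sin.tendsto 0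
  have hc2s : Tendsto (fun s : ℝ => Real.cos (2 * s)) F (nhds 1) := by
    refine Tendsto.mono_left ?_ nhdsWithin_le_nhds
    have hcc : Continuous fun s : ℝ => Real.cos (2 * s) :=
      Real.continuous_cos.comp (continuous_const.mul continuous_id)
    simpa using hcc.tendsto 0
  have hca : Tendsto (fun s : ℝ => Real.cos (a s)) F (nhds 1) := by
    refine Tendsto.mono_left ?_ nhdsWithin_le_nhds
    have hcc : Continuous fun s : ℝ => Real.cos (a s) := Real.continuous_cos.comp ha.continuous
    simpa [h0] using hcc.tendsto 0
  have hsa : Tendsto (fun s : ℝ => Real.sin (a s)) F (nhds 0) := by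
    refine Tendsto.mono_left ?_ nhdsWithin_le_nhds
    have hcc : Continuous fun s : ℝ => Real.sin (a s) := Real.continuous_sin.comp ha.continuous
    simpa [h0] using hcc.tendsto 0
  have hta : Tendsto (deriv a) F (nhds A) :=
    Tendsto.mono_left (hcont_da.tendsto 0) nhdsWithin_le_nhds
  have hid : Tendsto (fun s : ℝ => s) F (nhds 0) :=
    Tendsto.mono_left (continuous_id.tendsto 0) nhdsWithin_le_nhds
  -- numerator and denominator rescaled by s²
  set N : ℝ → ℝ := fun s => deriv a s * Real.cos s * (Real.sin s / s) *
      (Real.cos (2*s) + ((l:ℝ)^2 - (k:ℝ)^2) * Real.sin (a s)^2) -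
    (Real.sin (a s) / s) * Real.cos (a s) * ((k:ℝ)^2 * Real.cos s^2 + (l:ℝ)^2 * Real.sin s^2)
    with hN
  set Dq : ℝ → ℝ := fun s => (Real.sin s / s)^2 * Real.cos s^2 +
    (Real.sin (a s) / s)^2 * ((l:ℝ)^2 * Real.sin s^2 + (k:ℝ)^2 * Real.cos s^2) with hDq
  have hNlim : Tendsto N F (nhds (A * (1 - (k:ℝ)^2))) := by
    have h1 : Tendsto (fun s => deriv a s * Real.cos s * (Real.sin s / s) *
        (Real.cos (2*s) + ((l:ℝ)^2 - (k:ℝ)^2) * Real.sin (a s)^2)) F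
        (nhds (A * 1 * 1 * (1 + ((l:ℝ)^2 - (k:ℝ)^2) * 0^2))) :=
      (((hta.mul hcs).mul hL3).mul (hc2s.add (tendsto_const_nhds.mul (hsa.pow 2))))
    have h2 : Tendsto (fun s => (Real.sin (a s) / s) * Real.cos (a s) *
        ((k:ℝ)^2 * Real.cos s^2 + (l:ℝ)^2 * Real.sin s^2)) F
        (nhds (A * 1 * ((k:ℝ)^2 * 1^2 + (l:ℝ)^2 * 0^2))) :=
      ((hL2.mul hca).mul ((tendsto_const_nhds.mul (hcs.pow 2)).add
        (tendsto_const_nhds.mul (hss.pow 2))))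
    have := h1.sub h2
    convert this using 2 <;> ring
  have hDlim : Tendsto Dq F (nhds (1 + A^2 * (k:ℝ)^2)) := by
    have h1 : Tendsto (fun s => (Real.sin s / s)^2 * Real.cos s^2 +
        (Real.sin (a s) / s)^2 * ((l:ℝ)^2 * Real.sin s^2 + (k:ℝ)^2 * Real.cos s^2)) F
        (nhds ((1:ℝ)^2 * 1^2 + A^2 * ((l:ℝ)^2 * 0^2 + (k:ℝ)^2 * 1^2))) :=
      ((hL3.pow 2).mul (hcs.pow 2)).add ((hL2.pow 2).mul
      ((tendsto_const_nhds.mul (hss.pow 2)).add (tendsto_const_nhds.mul (hcs.pow 2))))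
    convert h1 using 2 <;> ring
  have hDne : (1 : ℝ) + A^2 * (k:ℝ)^2 ≠ 0 := by positivity
  have hquot : Tendsto (fun s => N s / Dq s) F
      (nhds (A * (1 - (k:ℝ)^2) / (1 + A^2 * (k:ℝ)^2))) := hNlim.div hDlim hDne
  -- the other side: N/Dq = -s * a'' / (1 + a'^2) on Ioo
  have hO : Tendsto (fun s => -(s * deriv (deriv a) s / (1 + (deriv a s)^2))) F (nhds 0) := by
    have h1 : Tendsto (fun s => s * deriv (deriv a) s / (1 + (deriv a s)^2)) F
        (nhds (0 * deriv (deriv a) 0 / (1 + A^2))) := by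
      have hdd : Tendsto (deriv (deriv a)) F (nhds (deriv (deriv a) 0)) :=
        Tendsto.mono_left (hcont_dda.tendsto 0) nhdsWithin_le_nhds
      exact (hid.mul hdd).div ((tendsto_const_nhds.add (hta.pow 2))) (by positivity)
    simpa using h1.neg
  have heq : ∀ᶠ s in F, N s / Dq s = -(s * deriv (deriv a) s / (1 + (deriv a s)^2)) := by
    have hmem : Set.Ioo (0:ℝ) (π/2) ∈ F := Ioo_mem_nhdsGT_of_mem (by constructor <;> [rfl; positivity])
    filter_upwards [hmem] with s hs
    obtain ⟨hs0, hs2⟩ := hs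
    have hsne : s ≠ 0 := ne_of_gt hs0
    have hsin : 0 < Real.sin s := Real.sin_pos_of_pos_of_lt_pi hs0 (by linarith [pi_pos])
    have hcos : 0 < Real.cos s := Real.cos_pos_of_mem_Ioo ⟨by linarith [pi_pos], hs2⟩
    set D : ℝ := Real.sin s ^ 2 * Real.cos s ^ 2 +
      Real.sin (a s) ^ 2 * ((l:ℝ)^2 * Real.sin s^2 + (k:ℝ)^2 * Real.cos s^2) with hD
    have hDpos : 0 < D := by
      have : 0 < Real.sin s ^ 2 * Real.cos s ^ 2 := by positivity
      nlinarith [sq_nonneg (Real.sin (a s)), sq_nonneg (Real.sin s), sq_nonneg (Real.cos s),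
        sq_nonneg ((l:ℝ) * Real.sin s), sq_nonneg ((k:ℝ) * Real.cos s),
        mul_nonneg (sq_nonneg (Real.sin (a s))) (add_nonneg (mul_nonneg (sq_nonneg (l:ℝ)) (sq_nonneg (Real.sin s))) (mul_nonneg (sq_nonneg (k:ℝ)) (sq_nonneg (Real.cos s))))]
    have hDqD : Dq s = D / s^2 := by
      rw [hDq, hD]; field_simp; try ring
    set Nu : ℝ := deriv a s * (Real.cos s * Real.sin s *
        (Real.cos (2*s) + ((l:ℝ)^2 - (k:ℝ)^2) * Real.sin (a s)^2)) -
        Real.sin (a s) * Real.cos (a s) * ((k:ℝ)^2 * Real.cos s^2 + (l:ℝ)^2 * Real.sin s^2)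
      with hNu
    have hNsD : N s = Nu / s := by
      rw [hN, hNu]; field_simp
    have hode := hmin s ⟨hs0, hs2⟩
    have h1p : (0:ℝ) < 1 + (deriv a s)^2 := by positivity
    have hsplit : Nu / D = deriv a s * (Real.cos s * Real.sin s *
        (Real.cos (2*s) + ((l:ℝ)^2 - (k:ℝ)^2) * Real.sin (a s)^2)) / D -
        Real.sin (a s) * Real.cos (a s) * ((k:ℝ)^2 * Real.cos s^2 + (l:ℝ)^2 * Real.sin s^2) / D :=
      sub_div _ _ _
    have hfrac : Nu / D = -(deriv (deriv a) s / (1 + deriv a s ^ 2)) := by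
      rw [hsplit]; rw [← hD] at hode; linarith
    have hcancel : Nu / s / (D / s^2) = s * (Nu / D) := by
      field_simp
    rw [hNsD, hDqD, hcancel, hfrac]
    ring
  have := tendsto_nhds_unique (hquot.congr' heq) hO
  -- conclude
  have hk2 : (k:ℝ)^2 = 1 := by
    have hnum : A * (1 - (k:ℝ)^2) = 0 := by
      rcases div_eq_zero_iff.mp this with h | h
      · exact h
      · exact absurd h hDne
    rcases mul_eq_zero.mp hnum with h | h
    · exact absurd h (ne_of_gt hd0)
    · linarith
  have : (k:ℝ)^2 = (1:ℕ) := by simpa using hk2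
  exact_mod_cast this
end

section
/- Let λ, μ > 0 with λ < μ and set u₁ = 1/√((1+λ²)(1+μ²)). If χ = μu₁ and ψ = −λu₁ satisfy the two equations λ(1−μ²)/((1+λ²)(1+μ²)) − (2/μ)χψ + (1/λ)ψ² − λ(1+μ²)/(μ²−λ²)·τ² = 0 and μ(1−λ²)/((1+λ²)(1+μ²)) − (2/λ)χψ + (1/μ)χ² + μ(1+λ²)/(μ²−λ²)·z² = 0 with τ = z = 0, then λ² = μ² = 4, contradicting λ < μ. Hence this choice of (χ, ψ) is impossible when λ ≠ μ. -/
/-!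
Since `u₁² = 1 / ((1 + λ²)(1 + μ²))`, substituting `χ = μu₁`, `ψ = -λu₁`, `τ = z = 0` turns the
first equation into `λ(4 - μ²) / ((1 + λ²)(1 + μ²)) = 0` and, symmetrically, the second into
`μ(4 - λ²) / ((1 + λ²)(1 + μ²)) = 0`. Hence `λ² = μ² = 4`, so `λ = μ = 2`.
-/

lemma sq_one_div_sqrt {D u : ℝ} (hD : 0 ≤ D) (hu : u = 1 / Real.sqrt D) : u ^ 2 = 1 / D := by
  rw [hu, div_pow, one_pow, Real.sq_sqrt hD]

lemma sq_eq_four_of_codazzi {a b u : ℝ} (ha : a ≠ 0) (hb : b ≠ 0)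
    (hu : u ^ 2 = 1 / ((1 + a ^ 2) * (1 + b ^ 2)))
    (h : a * (1 - b ^ 2) / ((1 + a ^ 2) * (1 + b ^ 2)) + (2 / b) * (a * b * u ^ 2) +
      (1 / a) * (a * u) ^ 2 = 0) :
    b ^ 2 = 4 := by
  have hD : (1 + a ^ 2) * (1 + b ^ 2) ≠ 0 := by positivity
  have hreduced : a * (4 - b ^ 2) / ((1 + a ^ 2) * (1 + b ^ 2)) = 0 := by
    rw [← h, mul_pow, hu]
    field_simp
    ring
  rcases div_eq_zero_iff.1 hreduced with hab | hD'
  · linarith [(mul_eq_zero.1 hab).resolve_left ha]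
  · exact absurd hD' hD

/-- With 0 < λ < μ, u₁ = 1/√((1+λ²)(1+μ²)), the choice
χ = μu₁, ψ = −λu₁, τ = z = 0 cannot satisfy the two Codazzi equations: they
would force λ² = μ² = 4, contradicting λ < μ. -/
theorem stmt_8 (lam mu u₁ chi psi tau z : ℝ) (hlam : 0 < lam) (hlm : lam < mu)
    (hu₁ : u₁ = 1 / Real.sqrt ((1 + lam ^ 2) * (1 + mu ^ 2)))
    (hchi : chi = mu * u₁) (hpsi : psi = -(lam * u₁)) (htau : tau = 0) (hz : z = 0)
    (h1 : lam * (1 - mu ^ 2) / ((1 + lam ^ 2) * (1 + mu ^ 2)) - (2 / mu) * (chi * psi) +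
        (1 / lam) * psi ^ 2 - lam * (1 + mu ^ 2) / (mu ^ 2 - lam ^ 2) * tau ^ 2 = 0)
    (h2 : mu * (1 - lam ^ 2) / ((1 + lam ^ 2) * (1 + mu ^ 2)) - (2 / lam) * (chi * psi) +
        (1 / mu) * chi ^ 2 + mu * (1 + lam ^ 2) / (mu ^ 2 - lam ^ 2) * z ^ 2 = 0) :
    False := by
  have hmu : 0 < mu := hlam.trans hlm
  have hu : u₁ ^ 2 = 1 / ((1 + lam ^ 2) * (1 + mu ^ 2)) := sq_one_div_sqrt (by positivity) hu₁
  subst hchi hpsi htau hz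
  have hmu_sq : mu ^ 2 = 4 :=
    sq_eq_four_of_codazzi hlam.ne' hmu.ne' hu (by linear_combination h1)
  have hlam_sq : lam ^ 2 = 4 :=
    sq_eq_four_of_codazzi hmu.ne' hlam.ne' (by rw [hu, mul_comm]) (by linear_combination h2)
  nlinarith
end

section
/- Let λ, μ > 0 with λ < μ and u₁ = 1/√((1+λ²)(1+μ²)). If χ = −λu₁ and ψ = μu₁ satisfy λ(1−μ²)/((1+λ²)(1+μ²)) − (2/μ)χψ + (1/λ)ψ² = 0 and μ(1−λ²)/((1+λ²)(1+μ²)) − (2/λ)χψ + (1/μ)χ² = 0, then 3λ² + μ² = λ²μ² and 3μ² + λ² = λ²μ², whence λ = μ, a contradiction. -/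
/-! With `u₁² = 1 / ((1 + λ²)(1 + μ²))` every term of each equation is a multiple of `u₁²`;
clearing it turns the first equation into `3λ² + μ² = λ²μ²` and, by the `λ ↔ μ, χ ↔ ψ`
symmetry, the second into `3μ² + λ² = λ²μ²`. Subtracting gives `λ² = μ²`, impossible for
`0 < λ < μ`. -/

lemma three_sq_add_sq_eq_sq_mul_sq_of_codazzi {a b D p s : ℝ} (ha : a ≠ 0) (hb : b ≠ 0)
    (hD : D = (1 + a ^ 2) * (1 + b ^ 2)) (hp : p = -(a * b) / D) (hs : s = b ^ 2 / D)
    (h : a * (1 - b ^ 2) / D - (2 / b) * p + (1 / a) * s = 0) :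
    3 * a ^ 2 + b ^ 2 = a ^ 2 * b ^ 2 := by
  have hD0 : D ≠ 0 := by rw [hD]; positivity
  subst hp hs
  field_simp at h
  linear_combination h

lemma sq_one_div_sqrt_mul {a b : ℝ} :
    (1 / Real.sqrt ((1 + a ^ 2) * (1 + b ^ 2))) ^ 2 = 1 / ((1 + a ^ 2) * (1 + b ^ 2)) := by
  rw [div_pow, one_pow, Real.sq_sqrt (by positivity)]

/-- With 0 < λ < μ, u₁ = 1/√((1+λ²)(1+μ²)), the choice
χ = −λu₁, ψ = μu₁ in the two Codazzi equations forces 3λ² + μ² = λ²μ² and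
3μ² + λ² = λ²μ², whence λ = μ, a contradiction. -/
theorem stmt_9 (lam mu u₁ chi psi : ℝ) (hlam : 0 < lam) (hlm : lam < mu)
    (hu₁ : u₁ = 1 / Real.sqrt ((1 + lam ^ 2) * (1 + mu ^ 2)))
    (hchi : chi = -(lam * u₁)) (hpsi : psi = mu * u₁)
    (h1 : lam * (1 - mu ^ 2) / ((1 + lam ^ 2) * (1 + mu ^ 2)) - (2 / mu) * (chi * psi) +
        (1 / lam) * psi ^ 2 = 0)
    (h2 : mu * (1 - lam ^ 2) / ((1 + lam ^ 2) * (1 + mu ^ 2)) - (2 / lam) * (chi * psi) +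
        (1 / mu) * chi ^ 2 = 0) :
    (3 * lam ^ 2 + mu ^ 2 = lam ^ 2 * mu ^ 2 ∧ 3 * mu ^ 2 + lam ^ 2 = lam ^ 2 * mu ^ 2) ∧
      False := by
  have hmu : 0 < mu := hlam.trans hlm
  have hu₁_sq : u₁ ^ 2 = 1 / ((1 + lam ^ 2) * (1 + mu ^ 2)) := hu₁ ▸ sq_one_div_sqrt_mul
  have hchi_psi : chi * psi = -(lam * mu) / ((1 + lam ^ 2) * (1 + mu ^ 2)) := by
    rw [hchi, hpsi, neg_div, div_eq_mul_one_div, ← hu₁_sq]; ring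
  have e1 : 3 * lam ^ 2 + mu ^ 2 = lam ^ 2 * mu ^ 2 :=
    three_sq_add_sq_eq_sq_mul_sq_of_codazzi hlam.ne' hmu.ne' rfl hchi_psi
      (by rw [hpsi, div_eq_mul_one_div, ← hu₁_sq]; ring) h1
  have e2 : 3 * mu ^ 2 + lam ^ 2 = mu ^ 2 * lam ^ 2 :=
    three_sq_add_sq_eq_sq_mul_sq_of_codazzi hmu.ne' hlam.ne' (mul_comm _ _)
      (by rw [hchi_psi, mul_comm lam]) (by rw [hchi, div_eq_mul_one_div, ← hu₁_sq]; ring) h2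
  have hsq : lam ^ 2 < mu ^ 2 := pow_lt_pow_left₀ hlm hlam.le two_ne_zero
  exact ⟨⟨e1, by linarith⟩, by linarith⟩
end
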